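/- arXiv:1301.0783 — 6 statements merged into one kernel-verified Lean document; each statement's English description precedes it below -/
import Mathlib

section
/- Let f be a square-free positive integer with √f irrational, and let λ_α, t_α ∈ ℚ(√f) for α in a finite index set A. Write t_α = x_α + y_α·√f with x_α, y_α ∈ ℚ. If Σ_α λ_α·x_α = √f · Σ_α λ_α·y_α, then Σ_α λ_α ∧_ℚ t_α = 0 in ℝ ∧_ℚ ℝ. -/
/-- The wedge product `a ∧_ℚ b` in the exterior algebra of `ℝ` over `ℚ`. -/
noncomputable def wedge (a b : ℝ) : ExteriorAlgebra ℚ ℝ :=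
  ExteriorAlgebra.ι ℚ a * ExteriorAlgebra.ι ℚ b

lemma rat_indep (s : ℝ) (hs : Irrational s) (a b : ℚ) (h : (a : ℝ) + (b : ℝ) * s = 0) :
    a = 0 ∧ b = 0 := by
  by_cases hb : b = 0
  · subst hb; simp at h; exact ⟨by exact_mod_cast h, rfl⟩
  · exfalso
    apply hs
    refine ⟨-a / b, ?_⟩
    have hb' : (b : ℝ) ≠ 0 := by exact_mod_cast hb
    push_cast
    field_simp
    linarith

/-- If `λ_α, t_α ∈ ℚ(√f)`, `t_α = x_α + y_α √f`, and the Galois flux vanishes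
(`Σ λ_α x_α = √f Σ λ_α y_α`), then the SAF-invariant `Σ λ_α ∧_ℚ t_α` vanishes. -/
theorem stmt1 (f : ℕ) (hf : Squarefree f) (hirr : Irrational (Real.sqrt f))
    (A : Type*) [Fintype A]
    (lam : A → ℝ) (p q x y : A → ℚ)
    (hlam : ∀ α, lam α = (p α : ℝ) + (q α : ℝ) * Real.sqrt f)
    (t : A → ℝ) (ht : ∀ α, t α = (x α : ℝ) + (y α : ℝ) * Real.sqrt f)
    (hflux : ∑ α, lam α * (x α : ℝ) = Real.sqrt f * ∑ α, lam α * (y α : ℝ)) :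
    ∑ α, wedge (lam α) (t α) = 0 := by
  set s := Real.sqrt f with hs
  have hss : s * s = (f : ℝ) := Real.mul_self_sqrt (by positivity)
  have h1 : ∑ α, lam α * (x α : ℝ)
      = (∑ α, (p α : ℝ) * x α) + (∑ α, (q α : ℝ) * x α) * s := by
    rw [Finset.sum_mul, ← Finset.sum_add_distrib]
    exact Finset.sum_congr rfl fun α _ => by rw [hlam α]; ring
  have h2 : ∑ α, lam α * (y α : ℝ)
      = (∑ α, (p α : ℝ) * y α) + (∑ α, (q α : ℝ) * y α) * s := by
    rw [Finset.sum_mul, ← Finset.sum_add_distrib]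
    exact Finset.sum_congr rfl fun α _ => by rw [hlam α]; ring
  rw [h1, h2] at hflux
  obtain ⟨-, hBC⟩ := rat_indep s hirr
    ((∑ α, p α * x α) - f * ∑ α, q α * y α) ((∑ α, q α * x α) - ∑ α, p α * y α)
    (by push_cast
        linear_combination hflux + (∑ α, (q α : ℝ) * y α) * hss)
  have hBC' : (∑ α, (p α * y α - q α * x α) : ℚ) = 0 := by
    rw [Finset.sum_sub_distrib]
    linarith [hBC]
  -- compute each wedge
  have key : ∀ α, wedge (lam α) (t α) = (p α * y α - q α * x α) • wedge 1 s := by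
    intro α
    have e1 : lam α = (p α) • (1 : ℝ) + (q α) • s := by
      rw [hlam α]; simp [Rat.smul_def]
    have e2 : t α = (x α) • (1 : ℝ) + (y α) • s := by
      rw [ht α]; simp [Rat.smul_def]
    unfold wedge
    rw [e1, e2, map_add, map_add, map_smul, map_smul, map_smul, map_smul]
    have hswap : ExteriorAlgebra.ι ℚ s * ExteriorAlgebra.ι ℚ (1 : ℝ)
        = - (ExteriorAlgebra.ι ℚ (1 : ℝ) * ExteriorAlgebra.ι ℚ s) := by
      exact eq_neg_of_add_eq_zero_left (ExteriorAlgebra.ι_add_mul_swap (R := ℚ) s (1 : ℝ))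
    rw [add_mul, mul_add, mul_add, smul_mul_smul_comm, smul_mul_smul_comm,
      smul_mul_smul_comm, smul_mul_smul_comm, ExteriorAlgebra.ι_sq_zero,
      ExteriorAlgebra.ι_sq_zero, hswap]
    rw [smul_zero, smul_zero, smul_neg, sub_smul]
    module
  calc ∑ α, wedge (lam α) (t α) = ∑ α, (p α * y α - q α * x α) • wedge 1 s := by
        exact Finset.sum_congr rfl fun α _ => key α
    _ = (∑ α, (p α * y α - q α * x α)) • wedge 1 s := (Finset.sum_smul).symm
    _ = 0 := by rw [hBC', zero_smul]
end

section
/- Let λ_A, λ_B, λ_C, λ_D be positive reals and set t_A = λ_B + λ_C + λ_D, t_B = λ_C + λ_D − λ_A, t_C = λ_D − λ_A − λ_B, t_D = −λ_A − λ_B − λ_C. If λ_A ∧ t_A + λ_B ∧ t_B + λ_C ∧ t_C + λ_D ∧ t_D = 0 in ℝ ∧_ℚ ℝ, then λ_A ∧ (λ_B + λ_C + λ_D) + λ_B ∧ (λ_C + λ_D) + λ_C ∧ λ_D = 0, and consequently λ_A ∧ λ_B ∧ (λ_C + λ_D) = 0 in Λ³_ℚ ℝ. -/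
/-- The triple wedge product `a ∧_ℚ b ∧_ℚ c`. -/
noncomputable def wedge3 (a b c : ℝ) : ExteriorAlgebra ℚ ℝ :=
  ExteriorAlgebra.ι ℚ a * ExteriorAlgebra.ι ℚ b * ExteriorAlgebra.ι ℚ c

private lemma swap (a b : ℝ) :
    ExteriorAlgebra.ι ℚ b * ExteriorAlgebra.ι ℚ a
      = -(ExteriorAlgebra.ι ℚ a * ExteriorAlgebra.ι ℚ b) := by
  have := ExteriorAlgebra.ι_add_mul_swap (R := ℚ) a b
  linear_combination (norm := abel) this

private lemma sqz (x y : ℝ) :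
    ExteriorAlgebra.ι ℚ x * ExteriorAlgebra.ι ℚ y * ExteriorAlgebra.ι ℚ y = 0 := by
  rw [mul_assoc, ExteriorAlgebra.ι_sq_zero, mul_zero]

private lemma sqz2 (x y : ℝ) :
    ExteriorAlgebra.ι ℚ x * ExteriorAlgebra.ι ℚ y * ExteriorAlgebra.ι ℚ x = 0 := by
  rw [mul_assoc, swap x y, mul_neg, ← mul_assoc, ExteriorAlgebra.ι_sq_zero, zero_mul, neg_zero]

/-- Vanishing of the SAF-invariant of the IET with combinatorics (A B C D / D C B A)
implies `λ_A ∧ (λ_B+λ_C+λ_D) + λ_B ∧ (λ_C+λ_D) + λ_C ∧ λ_D = 0`, and from this one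
deduces `λ_A ∧ λ_B ∧ (λ_C+λ_D) = 0` in `Λ³_ℚ ℝ`. -/
theorem stmt5 (lA lB lC lD : ℝ) (hA : 0 < lA) (hB : 0 < lB) (hC : 0 < lC) (hD : 0 < lD)
    (tA tB tC tD : ℝ)
    (htA : tA = lB + lC + lD) (htB : tB = lC + lD - lA)
    (htC : tC = lD - lA - lB) (htD : tD = -lA - lB - lC)
    (hSAF : wedge lA tA + wedge lB tB + wedge lC tC + wedge lD tD = 0) :
    wedge lA (lB + lC + lD) + wedge lB (lC + lD) + wedge lC lD = 0 ∧
      wedge3 lA lB (lC + lD) = 0 := by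
  subst htA htB htC htD
  set ι := ExteriorAlgebra.ι ℚ (M := ℝ)
  simp only [wedge, wedge3, map_add, map_sub, map_neg, mul_add, mul_sub, mul_neg,
    add_mul, sub_mul, neg_mul] at hSAF ⊢
  rw [swap lA lB, swap lA lC, swap lA lD, swap lB lC, swap lB lD, swap lC lD] at hSAF
  have h2 : (2 : ℚ) • (ι lA * ι lB + (ι lA * ι lC + ι lA * ι lD) +
      (ι lB * ι lC + ι lB * ι lD) + ι lC * ι lD) = 0 := by
    rw [two_smul]
    linear_combination (norm := abel) hSAF
  have hS : ι lA * ι lB + (ι lA * ι lC + ι lA * ι lD) +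
      (ι lB * ι lC + ι lB * ι lD) + ι lC * ι lD = 0 :=
    (smul_eq_zero.mp h2).resolve_left (by norm_num)
  constructor
  · linear_combination (norm := abel) hS
  · have hmul := congrArg (· * (ι lC + ι lD)) hS
    simp only [add_mul, zero_mul, mul_add] at hmul
    have sq : ∀ x y : ℝ, ι x * ι y * ι y = 0 := sqz
    have sq2 : ∀ x y : ℝ, ι x * ι y * ι x = 0 := sqz2
    have e7 : ι lA * ι lD * ι lC = -(ι lA * ι lC * ι lD) := by
      rw [mul_assoc, swap lC lD, mul_neg, ← mul_assoc]
    have e8 : ι lB * ι lD * ι lC = -(ι lB * ι lC * ι lD) := by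
      rw [mul_assoc, swap lC lD, mul_neg, ← mul_assoc]
    rw [sq lA lC, sq lA lD, sq lB lC, sq lB lD, sq lC lD, sq2 lC lD, e7, e8] at hmul
    linear_combination (norm := abel) hmul
end

section
/- Let λ_A, λ_B, λ_C, λ_D be positive reals satisfying λ_A ∧ (λ_B + λ_C + λ_D) + λ_B ∧ (λ_C + λ_D) + λ_C ∧ λ_D = 0 in ℝ ∧_ℚ ℝ. Then λ_A ∧ λ_B ∧ λ_C ∧ λ_D = 0 in Λ⁴_ℚ ℝ and λ_A ∧ λ_B ∧ (λ_C + λ_D) = 0 in Λ³_ℚ ℝ. Consequently the ℚ-span of {λ_A, λ_B, λ_C, λ_D} has dimension at most 2 over ℚ. -/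
/-- The quadruple wedge product `a ∧_ℚ b ∧_ℚ c ∧_ℚ d`. -/
noncomputable def wedge4 (a b c d : ℝ) : ExteriorAlgebra ℚ ℝ :=
  ExteriorAlgebra.ι ℚ a * ExteriorAlgebra.ι ℚ b * ExteriorAlgebra.ι ℚ c * ExteriorAlgebra.ι ℚ d

/-!
In terms of the partial sums, the SAF form is
`(λ_A + λ_B) ∧ (λ_B + λ_C) - λ_D ∧ (λ_A + λ_B + λ_C)`, so its vanishing says that two decomposable
2-vectors agree. Over a field, `a ∧ b = c ∧ d` forces `c, d ∈ span {a, b}` when `a ∧ b ≠ 0`, and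
forces both pairs to be dependent when `a ∧ b = 0`; either way `a, b, c, d`, and with them the four
lengths, span at most a plane. Three or four vectors in a plane are dependent, so their wedge
products vanish.
-/

open ExteriorAlgebra Module Submodule

section CommRing

variable {R M : Type*} [CommRing R] [AddCommGroup M] [Module R M]

theorem ExteriorAlgebra.ι_mul_ι_eq_neg (a b : M) : ι R a * ι R b = -(ι R b * ι R a) :=
  eq_neg_of_add_eq_zero_left (ι_add_mul_swap a b)

theorem ExteriorAlgebra.ι_mul_ι_mul_ι_self (a b : M) : ι R a * ι R b * ι R a = 0 := by
  rw [ι_mul_ι_eq_neg a b, neg_mul, mul_assoc, ι_sq_zero, mul_zero, neg_zero]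

theorem ExteriorAlgebra.ιMulti_two (a b : M) : ιMulti R 2 ![a, b] = ι R a * ι R b := by
  simp [ιMulti_apply]

theorem ExteriorAlgebra.ιMulti_three (a b c : M) :
    ιMulti R 3 ![a, b, c] = ι R a * ι R b * ι R c := by
  simp [ιMulti_apply, mul_assoc]

theorem ExteriorAlgebra.ιMulti_four (a b c d : M) :
    ιMulti R 4 ![a, b, c, d] = ι R a * ι R b * ι R c * ι R d := by
  simp [ιMulti_apply, mul_assoc]

theorem ExteriorAlgebra.saf_form_eq_sub (a b c d : M) :
    ι R a * ι R (b + c + d) + ι R b * ι R (c + d) + ι R c * ι R d =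
      ι R (a + b) * ι R (b + c) - ι R d * ι R (a + b + c) := by
  simp only [map_add, mul_add, add_mul, ι_sq_zero]
  rw [ι_mul_ι_eq_neg d a, ι_mul_ι_eq_neg d b, ι_mul_ι_eq_neg d c]
  abel

theorem span_le_span_partial_sums (a b c d : M) :
    span R {a, b, c, d} ≤ span R {a + b, b + c, d, a + b + c} := by
  have hmem : ∀ x ∈ ({a + b, b + c, d, a + b + c} : Set M),
      x ∈ span R ({a + b, b + c, d, a + b + c} : Set M) := fun x hx => subset_span hx
  rw [span_le]
  simp only [Set.insert_subset_iff, Set.singleton_subset_iff, SetLike.mem_coe]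
  refine ⟨?_, ?_, ?_, hmem d (by simp)⟩
  · simpa using sub_mem (hmem (a + b + c) (by simp)) (hmem (b + c) (by simp))
  · simpa using sub_mem (hmem (a + b) (by simp))
      (sub_mem (hmem (a + b + c) (by simp)) (hmem (b + c) (by simp)))
  · simpa using sub_mem (hmem (a + b + c) (by simp)) (hmem (a + b) (by simp))

end CommRing

section Field

variable {K V : Type*} [Field K] [AddCommGroup V] [Module K V]

theorem ExteriorAlgebra.ιMulti_ne_zero_of_linearIndependent {n : ℕ} {v : Fin n → V}
    (hv : LinearIndependent K v) : ιMulti K n v ≠ 0 := by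
  let s : Set.powersetCard (Fin n) n := ⟨Finset.univ, by simp [Set.powersetCard]⟩
  have hs : Set.powersetCard.ofFinEmbEquiv.symm s = (OrderIso.refl (Fin n)).toOrderEmbedding :=
    (Finset.orderEmbOfFin_unique' _ fun _ => Finset.mem_univ _).symm
  have h := (exteriorPower.ιMulti_family_linearIndependent_field n hv).ne_zero s
  rwa [exteriorPower.ιMulti_family, hs, ne_eq, ← Submodule.coe_eq_zero,
    exteriorPower.ιMulti_apply_coe] at h

theorem ExteriorAlgebra.ιMulti_eq_zero_iff_not_linearIndependent {n : ℕ} {v : Fin n → V} :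
    ιMulti K n v = 0 ↔ ¬LinearIndependent K v :=
  ⟨fun h hv => ιMulti_ne_zero_of_linearIndependent hv h, (ιMulti K n).map_linearDependent v⟩

theorem ExteriorAlgebra.ιMulti_eq_zero_of_forall_mem {n : ℕ} {v : Fin n → V}
    {W : Submodule K V} [FiniteDimensional K W] (hW : finrank K W < n) (hv : ∀ i, v i ∈ W) :
    ιMulti K n v = 0 := by
  refine ιMulti_eq_zero_iff_not_linearIndependent.mpr fun hli => hW.not_ge ?_
  have hliW : LinearIndependent K fun i => (⟨v i, hv i⟩ : W) := hli.of_comp W.subtype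
  simpa using hliW.fintype_card_le_finrank

theorem finrank_span_pair_le_two (a b : V) : finrank K (span K {a, b}) ≤ 2 := by
  classical
  exact (finrank_span_le_card ({a, b} : Set V)).trans (by simpa using Finset.card_le_two)

theorem ExteriorAlgebra.finrank_span_pair_le_one_of_ι_mul_ι_eq_zero {a b : V}
    (h : ι K a * ι K b = 0) : finrank K (span K {a, b}) ≤ 1 := by
  rw [← ιMulti_two, ιMulti_eq_zero_iff_not_linearIndependent,
    linearIndependent_iff_card_eq_finrank_span, Matrix.range_cons_cons_empty,
    Fintype.card_fin, Set.finrank] at h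
  have := finrank_span_pair_le_two (K := K) a b
  omega

theorem ExteriorAlgebra.mem_span_pair_of_ι_mul_ι_mul_ι_eq_zero {a b c : V}
    (hab : ι K a * ι K b ≠ 0) (h : ι K c * ι K a * ι K b = 0) : c ∈ span K {a, b} := by
  rw [← ιMulti_two, ne_eq, ιMulti_eq_zero_iff_not_linearIndependent, not_not] at hab
  rw [← ιMulti_three] at h
  by_contra hc
  refine ιMulti_ne_zero_of_linearIndependent ?_ h
  exact linearIndependent_finCons.mpr ⟨hab, by rwa [Matrix.range_cons_cons_empty]⟩

theorem ExteriorAlgebra.finrank_span_le_two_of_ι_mul_ι_eq {a b c d : V}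
    (h : ι K a * ι K b = ι K c * ι K d) : finrank K (span K {a, b, c, d}) ≤ 2 := by
  have := FiniteDimensional.span_of_finite K (Set.toFinite {a, b})
  have := FiniteDimensional.span_of_finite K (Set.toFinite {c, d})
  rw [show ({a, b, c, d} : Set V) = {a, b} ∪ {c, d} by rw [Set.insert_union, Set.singleton_union],
    span_union]
  by_cases hab : ι K a * ι K b = 0
  · have hcd : ι K c * ι K d = 0 := h ▸ hab
    calc finrank K ↥(span K {a, b} ⊔ span K {c, d})
        ≤ finrank K (span K {a, b}) + finrank K (span K {c, d}) :=
          finrank_add_le_finrank_add_finrank _ _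
      _ ≤ 2 := by
          linarith [finrank_span_pair_le_one_of_ι_mul_ι_eq_zero hab,
            finrank_span_pair_le_one_of_ι_mul_ι_eq_zero hcd]
  · have hmem : ∀ x, ι K x * ι K c * ι K d = 0 → x ∈ span K {a, b} := fun x hx =>
      mem_span_pair_of_ι_mul_ι_mul_ι_eq_zero hab (by rwa [mul_assoc, h, ← mul_assoc])
    have hc : c ∈ span K {a, b} := hmem c (by rw [ι_sq_zero, zero_mul])
    have hd : d ∈ span K {a, b} := hmem d (by rw [mul_assoc, ← mul_assoc, ι_mul_ι_mul_ι_self])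
    rw [sup_eq_left.mpr (span_le.mpr (Set.pair_subset hc hd))]
    exact finrank_span_pair_le_two a b

theorem ExteriorAlgebra.finrank_span_le_two_of_saf_form_eq_zero {a b c d : V}
    (h : ι K a * ι K (b + c + d) + ι K b * ι K (c + d) + ι K c * ι K d = 0) :
    finrank K (span K {a, b, c, d}) ≤ 2 := by
  rw [saf_form_eq_sub, sub_eq_zero] at h
  have := FiniteDimensional.span_of_finite K (Set.toFinite {a + b, b + c, d, a + b + c})
  exact (finrank_mono (span_le_span_partial_sums a b c d)).trans
    (finrank_span_le_two_of_ι_mul_ι_eq h)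

end Field

theorem stmt6_general (lA lB lC lD : ℝ)
    (hSAF : wedge lA (lB + lC + lD) + wedge lB (lC + lD) + wedge lC lD = 0) :
    wedge4 lA lB lC lD = 0 ∧ wedge3 lA lB (lC + lD) = 0 ∧
      Module.finrank ℚ (Submodule.span ℚ ({lA, lB, lC, lD} : Set ℝ)) ≤ 2 := by
  set W := span ℚ ({lA, lB, lC, lD} : Set ℝ)
  have : FiniteDimensional ℚ W := FiniteDimensional.span_of_finite ℚ (Set.toFinite _)
  have hrank : finrank ℚ W ≤ 2 := finrank_span_le_two_of_saf_form_eq_zero hSAF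
  have hmem : ∀ x ∈ ({lA, lB, lC, lD} : Set ℝ), x ∈ W := fun x hx => subset_span hx
  refine ⟨?_, ?_, hrank⟩
  · rw [wedge4, ← ιMulti_four]
    refine ιMulti_eq_zero_of_forall_mem (W := W) (by omega) fun i => ?_
    fin_cases i <;> simp [hmem]
  · rw [wedge3, ← ιMulti_three]
    refine ιMulti_eq_zero_of_forall_mem (W := W) (by omega) fun i => ?_
    fin_cases i <;> simp [hmem, add_mem]

/-- If `λ_A ∧ (λ_B+λ_C+λ_D) + λ_B ∧ (λ_C+λ_D) + λ_C ∧ λ_D = 0` in `ℝ ∧_ℚ ℝ`, then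
`λ_A ∧ λ_B ∧ λ_C ∧ λ_D = 0`, `λ_A ∧ λ_B ∧ (λ_C+λ_D) = 0`, and the ℚ-span of the four
lengths has dimension at most 2. -/
theorem stmt6 (lA lB lC lD : ℝ) (hA : 0 < lA) (hB : 0 < lB) (hC : 0 < lC) (hD : 0 < lD)
    (hSAF : wedge lA (lB + lC + lD) + wedge lB (lC + lD) + wedge lC lD = 0) :
    wedge4 lA lB lC lD = 0 ∧ wedge3 lA lB (lC + lD) = 0 ∧
      Module.finrank ℚ (Submodule.span ℚ ({lA, lB, lC, lD} : Set ℝ)) ≤ 2 :=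
  stmt6_general lA lB lC lD hSAF
end

section
/- Let K be a real quadratic field with Galois conjugation x ↦ x', and let w₁,…,w_k, h₁,…,h_k, t₁,…,t_k ∈ K with all w_i, h_i > 0. Suppose that for every s ∈ K: Σ_{i=1}^k w_i ∧_ℚ (t_i − s·h_i) = 0 in ℝ ∧_ℚ ℝ, where the case s-term means Σ w_i ∧ t_i = 0 and Σ w_i ∧ (s·h_i) = 0 for all s ∈ K. Then Σ_{i=1}^k w_i·h'_i = 0 and Σ_{i=1}^k w'_i·h_i = 0. -/
namespace ExteriorAlgebra

variable {R M : Type*} [CommRing R] [AddCommGroup M] [Module R M]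

theorem ι_smul_add_smul_mul_ι_smul_add_smul (u v : M) (a b c d : R) :
    ι R (a • u + b • v) * ι R (c • u + d • v) = (a * d - b * c) • (ι R u * ι R v) := by
  simp only [map_add, map_smul, add_mul, mul_add, smul_mul_smul_comm, ι_sq_zero, smul_zero,
    eq_neg_of_add_eq_zero_left (ι_add_mul_swap (R := R) u v), smul_neg]
  module

theorem ι_mul_ι_ne_zero_of_linearIndependent {K E : Type*} [Field K] [AddCommGroup E]
    [Module K E] {a b : E} (hab : LinearIndependent K ![a, b]) : ι K a * ι K b ≠ 0 := by
  -- `ι a * ι b` is the basis 2-vector indexed by `univ`, whose increasing enumeration is `id`.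
  let s : Set.powersetCard (Fin 2) 2 := ⟨Finset.univ, rfl⟩
  have hs := (exteriorPower.ιMulti_family_linearIndependent_field 2 hab).ne_zero s
  have hlt := (Set.powersetCard.ofFinEmbEquiv.symm s).strictMono (show (0 : Fin 2) < 1 by decide)
  have e0 : Set.powersetCard.ofFinEmbEquiv.symm s 0 = 0 := by omega
  have e1 : Set.powersetCard.ofFinEmbEquiv.symm s 1 = 1 := by omega
  contrapose! hs
  ext1
  simpa [ιMulti_family, ιMulti_apply, Matrix.vecTail, e0, e1] using hs

end ExteriorAlgebra

theorem Irrational.linearIndependent_one {x : ℝ} (hx : Irrational x) :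
    LinearIndependent ℚ ![1, x] := by
  rw [LinearIndependent.pair_iff]
  intro s t hst
  simp only [Rat.smul_def, mul_one] at hst
  have ht : t = 0 := by
    by_contra ht
    exact hx ⟨-s / t, by push_cast; field_simp; linarith⟩
  subst ht
  simp_all

theorem wedge_ratCast_add_mul (x : ℝ) (a b c d : ℚ) :
    wedge (a + b * x) (c + d * x) = (a * d - b * c) • wedge 1 x := by
  simpa only [wedge, Rat.smul_def, mul_one] using
    ExteriorAlgebra.ι_smul_add_smul_mul_ι_smul_add_smul (R := ℚ) (1 : ℝ) x a b c d

theorem sum_mul_sub_mul_eq_zero_of_sum_wedge_eq_zero {ι : Type*} [Fintype ι] {x : ℝ}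
    (hx : Irrational x) (a b c d : ι → ℚ)
    (h : ∑ i, wedge (a i + b i * x) (c i + d i * x) = 0) :
    ∑ i, (a i * d i - b i * c i) = 0 := by
  simp only [wedge_ratCast_add_mul, ← Finset.sum_smul] at h
  exact (smul_eq_zero.mp h).resolve_right
    (ExteriorAlgebra.ι_mul_ι_ne_zero_of_linearIndependent hx.linearIndependent_one)

theorem irrational_sqrt_of_squarefree {f : ℕ} (hf : Squarefree f) (hf1 : 1 < f) :
    Irrational √f := by
  refine irrational_sqrt_natCast_iff.mpr ?_
  rintro ⟨r, rfl⟩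
  have := Nat.isUnit_iff.mp (hf r dvd_rfl)
  simp_all

theorem stmt12_general (f : ℕ) (hf : Squarefree f) (hf1 : 1 < f)
    (k : ℕ) (w h w' h' : Fin k → ℝ)
    (aw bw ah bh : Fin k → ℚ)
    (hwdef : ∀ i, w i = (aw i : ℝ) + (bw i : ℝ) * Real.sqrt f)
    (hw'def : ∀ i, w' i = (aw i : ℝ) - (bw i : ℝ) * Real.sqrt f)
    (hhdef : ∀ i, h i = (ah i : ℝ) + (bh i : ℝ) * Real.sqrt f)
    (hh'def : ∀ i, h' i = (ah i : ℝ) - (bh i : ℝ) * Real.sqrt f)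
    (hSAFs : ∀ sa sb : ℚ,
      ∑ i, wedge (w i) (((sa : ℝ) + (sb : ℝ) * Real.sqrt f) * h i) = 0) :
    ∑ i, w i * h' i = 0 ∧ ∑ i, w' i * h i = 0 := by
  set x := √f
  have hx : Irrational x := irrational_sqrt_of_squarefree hf hf1
  have hxx : x * x = f := Real.mul_self_sqrt (Nat.cast_nonneg f)
  have hirr : ∑ i, (aw i * bh i - bw i * ah i) = 0 :=
    sum_mul_sub_mul_eq_zero_of_sum_wedge_eq_zero hx aw bw ah bh <| by
      simpa [hwdef, hhdef] using hSAFs 1 0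
  have hrat : ∑ i, (aw i * ah i - bw i * (f * bh i)) = 0 := by
    refine sum_mul_sub_mul_eq_zero_of_sum_wedge_eq_zero hx aw bw (fun i ↦ f * bh i) ah ?_
    have hxh : ∀ i, x * h i = ((f * bh i : ℚ) : ℝ) + ah i * x := fun i ↦ by
      rw [hhdef]; push_cast; linear_combination (bh i : ℝ) * hxx
    simpa [hwdef, hxh] using hSAFs 0 1
  have hconj : ∀ i, w i * h' i = ((aw i * ah i - bw i * (f * bh i) : ℚ) : ℝ)
      - ((aw i * bh i - bw i * ah i : ℚ) : ℝ) * x ∧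
      w' i * h i = ((aw i * ah i - bw i * (f * bh i) : ℚ) : ℝ)
      + ((aw i * bh i - bw i * ah i : ℚ) : ℝ) * x := fun i ↦ by
    rw [hwdef, hw'def, hhdef, hh'def]; push_cast
    constructor <;> linear_combination (-(bw i : ℝ) * bh i) * hxx
  constructor
  · simp only [fun i ↦ (hconj i).1, Finset.sum_sub_distrib, ← Finset.sum_mul, ← Rat.cast_sum,
      hirr, hrat, Rat.cast_zero, zero_mul, sub_zero]
  · simp only [fun i ↦ (hconj i).2, Finset.sum_add_distrib, ← Finset.sum_mul, ← Rat.cast_sum,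
      hirr, hrat, Rat.cast_zero, zero_mul, add_zero]

/-- Calta's theorem (core): if for every `s ∈ K = ℚ(√f)` the invariant
`Σ w_i ∧ (t_i − s·h_i)` vanishes (i.e. `Σ w_i ∧ t_i = 0` and `Σ w_i ∧ (s·h_i) = 0` for
all `s ∈ K`), then `Σ w_i·h'_i = 0` and `Σ w'_i·h_i = 0`. -/
theorem stmt12 (f : ℕ) (hf : Squarefree f) (hf1 : 1 < f)
    (k : ℕ) (w h t w' h' : Fin k → ℝ)
    (aw bw ah bh at' bt : Fin k → ℚ)
    (hwdef : ∀ i, w i = (aw i : ℝ) + (bw i : ℝ) * Real.sqrt f)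
    (hw'def : ∀ i, w' i = (aw i : ℝ) - (bw i : ℝ) * Real.sqrt f)
    (hhdef : ∀ i, h i = (ah i : ℝ) + (bh i : ℝ) * Real.sqrt f)
    (hh'def : ∀ i, h' i = (ah i : ℝ) - (bh i : ℝ) * Real.sqrt f)
    (htdef : ∀ i, t i = (at' i : ℝ) + (bt i : ℝ) * Real.sqrt f)
    (hwpos : ∀ i, 0 < w i) (hhpos : ∀ i, 0 < h i)
    (hSAFt : ∑ i, wedge (w i) (t i) = 0)
    (hSAFs : ∀ sa sb : ℚ,
      ∑ i, wedge (w i) (((sa : ℝ) + (sb : ℝ) * Real.sqrt f) * h i) = 0) :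
    ∑ i, w i * h' i = 0 ∧ ∑ i, w' i * h i = 0 :=
  stmt12_general f hf hf1 k w h w' h' aw bw ah bh hwdef hw'def hhdef hh'def hSAFs
end

section
/- Let K = ℚ(√f) be a real quadratic field and w₁,…,w_k, h₁,…,h_k ∈ K. Suppose Σ_{i=1}^k w_i ∧_ℚ (s·h_i) = 0 in ℝ ∧_ℚ ℝ for all s ∈ K. Then Σ_{i=1}^k (w'_i·s·h_i − w_i·s'·h'_i) = 0 for all s ∈ K, and in particular Σ w_i h'_i = −Σ w'_i h_i and Σ w_i h'_i = Σ w'_i h_i, hence Σ_{i=1}^k w_i·h'_i = 0. -/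
/-!
Put `x = √f`. As `1, x` are linearly independent over `ℚ`, the coefficient maps `p + q x ↦ p` and
`p + q x ↦ q` extend to `ℚ`-linear functionals `g₀, g₁` on `ℝ`, and `a ∧ b ↦ g₀ a g₁ b - g₀ b g₁ a`
is a `ℚ`-linear functional `F` on `⋀ ℝ`. For `w, v ∈ ℚ(x)` one has `w' v - w v' = 2 x F(w ∧ v)`;
with `v = s h_i`, whose conjugate is `s' h'_i`, summing over `i` gives the first claim. Taking
`s = 1` and `s = x` yields `∑ w_i h'_i = ∑ w'_i h_i` and `∑ w_i h'_i = -∑ w'_i h_i`.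
-/

theorem Squarefree.isUnit_of_isSquare {R : Type*} [Monoid R] {r : R} (hr : Squarefree r)
    (hsq : IsSquare r) : IsUnit r := by
  obtain ⟨s, rfl⟩ := hsq
  exact (hr s dvd_rfl).mul (hr s dvd_rfl)

theorem irrational_sqrt_of_squarefree_s13 {n : ℕ} (hn : Squarefree n) (hn1 : 1 < n) :
    Irrational √n :=
  irrational_sqrt_natCast_iff.2 fun hsq => hn1.ne' (Nat.isUnit_iff.1 (hn.isUnit_of_isSquare hsq))

theorem LinearIndependent.exists_coord_pair {K V : Type*} [Field K] [AddCommGroup V] [Module K V]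
    {x y : V} (hxy : LinearIndependent K ![x, y]) :
    ∃ g₀ g₁ : Module.Dual K V, ∀ p q : K, g₀ (p • x + q • y) = p ∧ g₁ (p • x + q • y) = q := by
  let B := Module.Basis.sumExtend hxy
  have hB : ∀ i, B (Sum.inl i) = ![x, y] i := fun i => by
    simp [B, Module.Basis.sumExtend]
    rfl
  have hx : B (Sum.inl 0) = x := hB 0
  have hy : B (Sum.inl 1) = y := hB 1
  refine ⟨B.coord (Sum.inl 0), B.coord (Sum.inl 1), fun p q => ?_⟩
  have e : p • x + q • y = p • B (Sum.inl 0) + q • B (Sum.inl 1) := by rw [hx, hy]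
  rw [e]
  simp

namespace ExteriorAlgebra

variable {R M : Type*} [CommRing R] [AddCommGroup M] [Module R M]

noncomputable def pairDet (g₀ g₁ : Module.Dual R M) : ExteriorAlgebra R M →ₗ[R] R :=
  liftAlternating <|
    Function.update 0 2 (Matrix.detRowAlternating.compLinearMap (LinearMap.pi ![g₀, g₁]))

theorem pairDet_ι_mul_ι (g₀ g₁ : Module.Dual R M) (a b : M) :
    pairDet g₀ g₁ (ι R a * ι R b) = g₀ a * g₁ b - g₀ b * g₁ a := by
  rw [pairDet, liftAlternating_ι_mul, liftAlternating_ι]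
  change AlternatingMap.curryLeft (Function.update (0 : ∀ n, M [⋀^Fin n]→ₗ[R] R) 2 _ 2) a ![b] = _
  rw [Function.update_self, AlternatingMap.curryLeft_apply_apply]
  change Matrix.det (Matrix.of fun i => LinearMap.pi ![g₀, g₁] (![a, b] i)) = _
  simp [Matrix.det_fin_two, mul_comm]

end ExteriorAlgebra

open ExteriorAlgebra

theorem Irrational.exists_coeff_functionals {x : ℝ} (hx : Irrational x) :
    ∃ g₀ g₁ : Module.Dual ℚ ℝ, ∀ p q : ℚ, g₀ (p + q * x) = p ∧ g₁ (p + q * x) = q := by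
  obtain ⟨g₀, g₁, hg⟩ := hx.linearIndependent_one.exists_coord_pair
  exact ⟨g₀, g₁, fun p q => by simpa [Rat.smul_def] using hg p q⟩

theorem add_mul_mul_add_mul_eq {x : ℝ} {r : ℚ} (hx : x * x = r) (a b c d : ℚ) :
    ((a : ℝ) + b * x) * (c + d * x) =
      ((a * c + b * d * r : ℚ) : ℝ) + ((a * d + b * c : ℚ) : ℝ) * x := by
  push_cast
  linear_combination (b * d : ℝ) * hx

theorem sub_mul_mul_sub_mul_eq {x : ℝ} {r : ℚ} (hx : x * x = r) (a b c d : ℚ) :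
    ((a : ℝ) - b * x) * (c - d * x) =
      ((a * c + b * d * r : ℚ) : ℝ) - ((a * d + b * c : ℚ) : ℝ) * x := by
  simpa [mul_neg, ← sub_eq_add_neg] using
    add_mul_mul_add_mul_eq (x := -x) (by rwa [neg_mul_neg]) a b c d

theorem conj_mul_sub_mul_conj {x : ℝ} {g₀ g₁ : Module.Dual ℚ ℝ}
    (hg : ∀ p q : ℚ, g₀ (p + q * x) = p ∧ g₁ (p + q * x) = q) (a b c d : ℚ) :
    ((a : ℝ) - b * x) * (c + d * x) - (a + b * x) * (c - d * x) =
      2 * x * (pairDet g₀ g₁ (wedge (a + b * x) (c + d * x)) : ℝ) := by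
  rw [wedge, pairDet_ι_mul_ι, (hg a b).1, (hg a b).2, (hg c d).1, (hg c d).2]
  push_cast
  ring

/-- If `Σ w_i ∧ (s·h_i) = 0` for all `s ∈ K = ℚ(√f)`, then
`Σ (w'_i·s·h_i − w_i·s'·h'_i) = 0` for all `s ∈ K`; in particular
`Σ w_i h'_i = −Σ w'_i h_i` and `Σ w_i h'_i = Σ w'_i h_i`, hence `Σ w_i h'_i = 0`. -/
theorem stmt13 (f : ℕ) (hf : Squarefree f) (hf1 : 1 < f)
    (k : ℕ) (w h w' h' : Fin k → ℝ)
    (aw bw ah bh : Fin k → ℚ)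
    (hwdef : ∀ i, w i = (aw i : ℝ) + (bw i : ℝ) * Real.sqrt f)
    (hw'def : ∀ i, w' i = (aw i : ℝ) - (bw i : ℝ) * Real.sqrt f)
    (hhdef : ∀ i, h i = (ah i : ℝ) + (bh i : ℝ) * Real.sqrt f)
    (hh'def : ∀ i, h' i = (ah i : ℝ) - (bh i : ℝ) * Real.sqrt f)
    (hSAFs : ∀ sa sb : ℚ,
      ∑ i, wedge (w i) (((sa : ℝ) + (sb : ℝ) * Real.sqrt f) * h i) = 0) :
    (∀ sa sb : ℚ,
      ∑ i, (w' i * (((sa : ℝ) + (sb : ℝ) * Real.sqrt f) * h i) -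
            w i * (((sa : ℝ) - (sb : ℝ) * Real.sqrt f) * h' i)) = 0) ∧
    ∑ i, w i * h' i = -∑ i, w' i * h i ∧
    ∑ i, w i * h' i = ∑ i, w' i * h i ∧
    ∑ i, w i * h' i = 0 := by
  set u := Real.sqrt f
  have hu : u * u = ((f : ℚ) : ℝ) := by simp [u]
  have hirr : Irrational u := irrational_sqrt_of_squarefree_s13 hf hf1
  obtain ⟨g₀, g₁, hg⟩ := hirr.exists_coeff_functionals
  have hconj : ∀ sa sb : ℚ,
      ∑ i, (w' i * ((sa + sb * u) * h i) - w i * ((sa - sb * u) * h' i)) = 0 := by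
    intro sa sb
    calc _ = ∑ i, 2 * u * (pairDet g₀ g₁ (wedge (w i) ((sa + sb * u) * h i)) : ℝ) :=
          Finset.sum_congr rfl fun i _ => by
            rw [hw'def, hwdef, hhdef, hh'def, add_mul_mul_add_mul_eq hu,
              sub_mul_mul_sub_mul_eq hu, conj_mul_sub_mul_conj hg]
      _ = 2 * u * (pairDet g₀ g₁ (∑ i, wedge (w i) ((sa + sb * u) * h i)) : ℝ) := by
          rw [map_sum, Rat.cast_sum, Finset.mul_sum]
      _ = 0 := by rw [hSAFs, map_zero, Rat.cast_zero, mul_zero]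
  have hs_one := hconj 1 0
  have hs_sqrt := hconj 0 1
  simp only [Rat.cast_one, Rat.cast_zero, zero_mul, add_zero, one_mul, sub_zero,
    Finset.sum_sub_distrib, zero_add, zero_sub, neg_mul, mul_neg, sub_neg_eq_add] at hs_one hs_sqrt
  have hanti : ∑ i, w i * h' i = -∑ i, w' i * h i := by
    have hmul : u * (∑ i, w' i * h i + ∑ i, w i * h' i) = 0 := by
      rw [← hs_sqrt, mul_add, Finset.mul_sum, Finset.mul_sum, ← Finset.sum_add_distrib]
      exact Finset.sum_congr rfl fun i _ => by ring
    linarith [(mul_eq_zero.1 hmul).resolve_left hirr.ne_zero]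
  exact ⟨hconj, hanti, by linarith, by linarith⟩
end

section
/- Let a, b, c, d ∈ K be elements of a real quadratic field K with (a,b) ≠ (0,0) and the function R(t) = (a + bt)/(c + dt) nonconstant (i.e. ad − bc ≠ 0) and c ≠ 0. Then for every ε > 0 there exists t ∈ K with 0 < |t| < ε and R(t) ∈ ℚ. -/
/-- Membership in the real quadratic field `ℚ(√f) ⊂ ℝ`. -/
def inK (f : ℕ) (x : ℝ) : Prop := ∃ p q : ℚ, x = (p : ℝ) + (q : ℝ) * Real.sqrt f

lemma inK_rat (f : ℕ) (q : ℚ) : inK f (q : ℝ) := ⟨q, 0, by push_cast; ring⟩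

lemma inK_add {f : ℕ} {x y : ℝ} (hx : inK f x) (hy : inK f y) : inK f (x + y) := by
  obtain ⟨p, q, rfl⟩ := hx
  obtain ⟨p', q', rfl⟩ := hy
  exact ⟨p + p', q + q', by push_cast; ring⟩

lemma inK_neg {f : ℕ} {x : ℝ} (hx : inK f x) : inK f (-x) := by
  obtain ⟨p, q, rfl⟩ := hx
  exact ⟨-p, -q, by push_cast; ring⟩

lemma inK_sub {f : ℕ} {x y : ℝ} (hx : inK f x) (hy : inK f y) : inK f (x - y) := by
  rw [sub_eq_add_neg]; exact inK_add hx (inK_neg hy)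

lemma inK_mul {f : ℕ} {x y : ℝ} (hx : inK f x) (hy : inK f y) : inK f (x * y) := by
  obtain ⟨p, q, rfl⟩ := hx
  obtain ⟨p', q', rfl⟩ := hy
  refine ⟨p * p' + f * q * q', p * q' + q * p', ?_⟩
  have hs : Real.sqrt f * Real.sqrt f = (f : ℝ) :=
    Real.mul_self_sqrt (by positivity)
  push_cast
  linear_combination (q : ℝ) * (q' : ℝ) * hs

lemma sqrt_irrational {f : ℕ} (hf : Squarefree f) (hf1 : 1 < f) :
    Irrational (Real.sqrt f) := by
  rw [irrational_sqrt_natCast_iff]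
  rintro ⟨k, hk⟩
  have hu : IsUnit k := hf k (hk ▸ dvd_refl _)
  have : k = 1 := Nat.isUnit_iff.mp hu
  simp [this] at hk
  omega

lemma inK_inv {f : ℕ} (hf : Squarefree f) (hf1 : 1 < f) {x : ℝ} (hx : inK f x)
    (hx0 : x ≠ 0) : inK f x⁻¹ := by
  obtain ⟨p, q, rfl⟩ := hx
  have hirr := sqrt_irrational hf hf1
  have hs : Real.sqrt f * Real.sqrt f = (f : ℝ) :=
    Real.mul_self_sqrt (by positivity)
  -- the conjugate is nonzero
  have hconj : (p : ℝ) - (q : ℝ) * Real.sqrt f ≠ 0 := by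
    intro h
    rcases eq_or_ne q 0 with hq | hq
    · apply hx0
      have : (p : ℝ) = 0 := by rw [hq] at h; simpa using h
      rw [hq, this]; simp
    · apply hirr
      refine ⟨p / q, ?_⟩
      have hqR : (q : ℝ) ≠ 0 := by exact_mod_cast hq
      push_cast
      field_simp
      linarith [h]
  set n : ℚ := p ^ 2 - f * q ^ 2 with hn
  have hnR : ((n : ℚ) : ℝ) = ((p : ℝ) + q * Real.sqrt f) * ((p : ℝ) - q * Real.sqrt f) := by
    rw [hn]
    push_cast
    linear_combination (q : ℝ) ^ 2 * hs
  have hn0 : (n : ℝ) ≠ 0 := by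
    rw [hnR]; exact mul_ne_zero hx0 hconj
  refine ⟨p / n, -q / n, ?_⟩
  have hnq : (n : ℚ) ≠ 0 := by exact_mod_cast hn0
  have cand : ((p / n : ℚ) : ℝ) + ((-q / n : ℚ) : ℝ) * Real.sqrt f
      = ((p : ℝ) - (q : ℝ) * Real.sqrt f) / (n : ℝ) := by
    push_cast
    field_simp
    ring
  have key : (((p / n : ℚ) : ℝ) + ((-q / n : ℚ) : ℝ) * Real.sqrt f)
      * ((p : ℝ) + (q : ℝ) * Real.sqrt f) = 1 := by
    rw [cand, div_mul_eq_mul_div, mul_comm, ← hnR, div_self hn0]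
  exact inv_eq_of_mul_eq_one_left key

lemma inK_div {f : ℕ} (hf : Squarefree f) (hf1 : 1 < f) {x y : ℝ} (hx : inK f x)
    (hy : inK f y) (hy0 : y ≠ 0) : inK f (x / y) := by
  rw [div_eq_mul_inv]; exact inK_mul hx (inK_inv hf hf1 hy hy0)

/-- A nonconstant Möbius map `R(t) = (a+bt)/(c+dt)` with coefficients in a real
quadratic field `K`, `(a,b) ≠ (0,0)`, `ad − bc ≠ 0`, `c ≠ 0`, takes rational values at
arbitrarily small nonzero `t ∈ K`. -/
theorem stmt18 (f : ℕ) (hf : Squarefree f) (hf1 : 1 < f)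
    (a b c d : ℝ) (haK : inK f a) (hbK : inK f b) (hcK : inK f c) (hdK : inK f d)
    (hab : ¬ (a = 0 ∧ b = 0)) (hdet : a * d - b * c ≠ 0) (hc : c ≠ 0) :
    ∀ ε > (0 : ℝ), ∃ t : ℝ, inK f t ∧ 0 < |t| ∧ |t| < ε ∧
      ∃ r : ℚ, (a + b * t) / (c + d * t) = (r : ℝ) := by
  intro ε hε
  set r₀ : ℝ := a / c with hr₀
  set M : ℝ := |b - r₀ * d| with hM
  have hM0 : 0 < M := by
    rw [hM, abs_pos, hr₀]
    intro h
    apply hdet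
    field_simp at h
    linarith [h]
  have hcabs : 0 < |c| := abs_pos.mpr hc
  set δ : ℝ := min (ε * M / (2 * |c|)) (M / (2 * (|d| + 1))) with hδ
  have hδ0 : 0 < δ := by
    apply lt_min
    · positivity
    · positivity
  obtain ⟨r, hr1, hr2⟩ := exists_rat_btwn (lt_add_of_pos_right r₀ hδ0)
  set D : ℝ := b - (r : ℝ) * d with hD
  have hrd : |((r : ℝ) - r₀) * d| < M / 2 := by
    have h1 : |((r : ℝ) - r₀) * d| ≤ δ * |d| := by
      rw [abs_mul]
      apply mul_le_mul_of_nonneg_right _ (abs_nonneg d)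
      rw [abs_of_pos (by linarith)]
      linarith
    have h2 : δ * |d| < M / 2 := by
      have hδ2 : δ ≤ M / (2 * (|d| + 1)) := min_le_right _ _
      calc δ * |d| ≤ M / (2 * (|d| + 1)) * |d| :=
            mul_le_mul_of_nonneg_right hδ2 (abs_nonneg d)
        _ < M / 2 := by
            rw [div_mul_eq_mul_div, div_lt_div_iff₀ (by positivity) (by norm_num)]
            nlinarith [abs_nonneg d]
    linarith
  have hDlb : M / 2 < |D| := by
    have : M ≤ |D| + |((r : ℝ) - r₀) * d| := by
      have : b - r₀ * d = D + ((r : ℝ) - r₀) * d := by rw [hD]; ring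
      calc M = |D + ((r : ℝ) - r₀) * d| := by rw [hM, this]
        _ ≤ |D| + |((r : ℝ) - r₀) * d| := abs_add_le _ _
    linarith
  have hD0 : D ≠ 0 := by
    intro h
    rw [h, abs_zero] at hDlb
    linarith
  set t : ℝ := ((r : ℝ) * c - a) / D with ht
  have hnum : (r : ℝ) * c - a = c * ((r : ℝ) - r₀) := by
    rw [hr₀]; field_simp
  have ht0 : t ≠ 0 := by
    rw [ht, div_ne_zero_iff]
    refine ⟨?_, hD0⟩
    rw [hnum]
    exact mul_ne_zero hc (by linarith)
  have htK : inK f t := by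
    apply inK_div hf hf1
    · exact inK_sub (inK_mul (inK_rat f r) hcK) haK
    · exact inK_sub hbK (inK_mul (inK_rat f r) hdK)
    · exact hD0
  have htsmall : |t| < ε := by
    rw [ht, abs_div, hnum, abs_mul]
    rw [div_lt_iff₀ (by linarith)]
    have h1 : |(r : ℝ) - r₀| < δ := by
      rw [abs_of_pos (by linarith)]; linarith
    have hδ1 : δ ≤ ε * M / (2 * |c|) := min_le_left _ _
    calc |c| * |(r : ℝ) - r₀| < |c| * δ := by
          apply mul_lt_mul_of_pos_left h1 hcabs
      _ ≤ |c| * (ε * M / (2 * |c|)) := by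
          apply mul_le_mul_of_nonneg_left hδ1 (le_of_lt hcabs)
      _ = ε * (M / 2) := by field_simp
      _ ≤ ε * |D| := by nlinarith
  have hcd : c + d * t = (c * b - a * d) / D := by
    rw [ht]; field_simp; ring
  have hcd0 : c + d * t ≠ 0 := by
    rw [hcd]
    apply div_ne_zero _ hD0
    intro h
    apply hdet
    linarith
  refine ⟨t, htK, abs_pos.mpr ht0, htsmall, r, ?_⟩
  have key : a + b * t = (r : ℝ) * (c + d * t) := by
    rw [ht]; field_simp; ring
  rw [key, mul_div_assoc, div_self hcd0, mul_one]
end
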